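/- arXiv:1303.4238 — 2 statements merged into one kernel-verified Lean document; each statement's English description precedes it below -/
import Mathlib

section
/- Let Y be a subgroup of ℚ with 2Y ≠ Y, and let f_1, f_2, f_3 be normalized positive definite functions on Y satisfying equation (S-D T): f_1(u_1+u_2+u_3)·f_2(u_1−u_2−u_3)·f_3(u_1+u_2−u_3) = f_1(u_1)f_1(u_2)f_1(u_3)·f_2(u_1)f_2(−u_2)f_2(−u_3)·f_3(u_1)f_3(u_2)f_3(−u_3) for all u_1, u_2, u_3 ∈ Y. If the set N = {y ∈ Y : f_1(y)·f_2(y)·f_3(y) ≠ 0} is different from {0}, then every f_i (i = 1,2,3) is of idempotent form: there exist a subgroup H of Y and characters χ_1, χ_2, χ_3 of Y such that f_i(y) = χ_i(y) for y ∈ H and f_i(y) = 0 for y ∉ H. -/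
/-- `f : Y → ℂ` is a positive definite function on the abelian group `Y`. -/
def IsPosDefFn {Y : Type*} [AddCommGroup Y] (f : Y → ℂ) : Prop :=
  ∀ (n : ℕ) (y : Fin n → Y) (c : Fin n → ℂ),
    0 ≤ (∑ i, ∑ j, f (y i - y j) * c i * (starRingEnd ℂ) (c j)).re ∧
    (∑ i, ∑ j, f (y i - y j) * c i * (starRingEnd ℂ) (c j)).im = 0

/-- `χ : Y → ℂ` is a character of the abelian group `Y`: a homomorphism of `Y`
into the unit circle in `ℂ`. -/
def IsCharFn {Y : Type*} [AddCommGroup Y] (χ : Y → ℂ) : Prop :=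
  (∀ a b : Y, χ (a + b) = χ a * χ b) ∧ ∀ a : Y, ‖χ a‖ = 1

/-- Equation (S-D T) for functions `f₁, f₂, f₃` on an abelian group. -/
def SDTEq {Y : Type*} [AddCommGroup Y] (f₁ f₂ f₃ : Y → ℂ) : Prop :=
  ∀ u₁ u₂ u₃ : Y,
    f₁ (u₁ + u₂ + u₃) * f₂ (u₁ - u₂ - u₃) * f₃ (u₁ + u₂ - u₃) =
      f₁ u₁ * f₁ u₂ * f₁ u₃ * (f₂ u₁ * f₂ (-u₂) * f₂ (-u₃)) *
        (f₃ u₁ * f₃ u₂ * f₃ (-u₃))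

/-!
Let `N = {y | f₁ y * f₂ y * f₃ y ≠ 0}`. Positive definite functions are hermitian, so (S-D T)
shows that `f₁ (u₁ + u₂ + u₃) * f₂ (u₁ - u₂ - u₃) * f₃ (u₁ + u₂ - u₃) ≠ 0` exactly when
`u₁, u₂, u₃ ∈ N`. Hence `N` is a subgroup, and `fᵢ (2w + n) ≠ 0` with `n ∈ N` forces `w ∈ N`.
Taking `(u₁, u₂, u₃) = (y, -y, y)` gives `|fᵢ y| = 1` on `N`. A normalized positive definite
function is multiplicative where it has modulus one, so `fᵢ` restricted to `N` is a character,
which extends to `Y` because the circle group is divisible.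
As `Y ≤ ℚ` and `2Y ≠ Y`, `Y / 2Y` has order two, and `N` (closed under halving, with `Y / N`
torsion) contains some `n₀ ∉ 2Y`. Every `y` is then `2w` or `2w + n₀`, so `fᵢ y ≠ 0` forces `y ∈ N`.
-/

open Function ComplexConjugate

namespace IsPosDefFn

variable {G : Type*} [AddCommGroup G] {f : G → ℂ}

theorem map_neg_eq_conj (hf : IsPosDefFn f) (x : G) : f (-x) = conj (f x) := by
  have h0 := (hf 1 ![0] ![1]).2
  have h1 := (hf 2 ![x, 0] ![1, 1]).2
  have h2 := (hf 2 ![x, 0] ![1, Complex.I]).2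
  simp only [Fin.sum_univ_one, Fin.sum_univ_two, Matrix.cons_val_zero, Matrix.cons_val_one,
    sub_self, sub_zero, zero_sub, map_one, mul_one, Complex.conj_I, Complex.add_im,
    Complex.mul_im, Complex.mul_re, Complex.neg_re, Complex.neg_im, Complex.I_re,
    Complex.I_im] at h0 h1 h2
  apply Complex.ext <;> simp only [Complex.conj_re, Complex.conj_im] <;> linarith

theorem map_neg_eq_zero_iff (hf : IsPosDefFn f) (x : G) : f (-x) = 0 ↔ f x = 0 := by
  rw [hf.map_neg_eq_conj, map_eq_zero]

theorem norm_map_neg (hf : IsPosDefFn f) (x : G) : ‖f (-x)‖ = ‖f x‖ := by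
  rw [hf.map_neg_eq_conj, Complex.norm_conj]

theorem norm_le_one (hf : IsPosDefFn f) (h0 : f 0 = 1) (x : G) : ‖f x‖ ≤ 1 := by
  have h := (hf 2 ![x, 0] ![1, -f x]).1
  simp only [Fin.sum_univ_two, Matrix.cons_val_zero, Matrix.cons_val_one,
    sub_self, sub_zero, zero_sub, h0, hf.map_neg_eq_conj, map_one, mul_one, one_mul] at h
  have : 0 ≤ 1 - ‖f x‖ ^ 2 := by
    convert h using 1
    rw [← Complex.ofReal_re (1 - ‖f x‖ ^ 2)]
    congr 1
    push_cast
    rw [← Complex.mul_conj']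
    ring
  nlinarith [norm_nonneg (f x)]

theorem map_add_of_norm_eq_one (hf : IsPosDefFn f) (h0 : f 0 = 1) {x : G} (hx : ‖f x‖ = 1)
    (y : G) : f (y + x) = f y * f x := by
  set d := f (y + x) - f y * f x with hd
  -- the form at the points `0, x, y + x` with these weights is `1 - ‖f x‖ ^ 2 - ‖d‖ ^ 2`
  have h := (hf 3 ![0, x, y + x] ![1, -conj (f x), -conj d]).1
  simp only [Fin.sum_univ_three, Matrix.cons_val_zero, Matrix.cons_val_one, Matrix.cons_val_two,
    Matrix.head_cons, Matrix.tail_cons, sub_self, sub_zero, zero_sub, h0, map_one, mul_one,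
    one_mul] at h
  rw [show x - (y + x) = -y by abel, show y + x - x = y by abel, hf.map_neg_eq_conj,
    hf.map_neg_eq_conj, hf.map_neg_eq_conj] at h
  have : 0 ≤ (1 - ‖f x‖ ^ 2) - ‖d‖ ^ 2 := by
    convert h using 1
    rw [← Complex.ofReal_re (1 - ‖f x‖ ^ 2 - ‖d‖ ^ 2)]
    congr 1
    push_cast
    rw [← Complex.mul_conj', ← Complex.mul_conj', hd]
    simp only [map_sub, map_mul, map_neg, Complex.conj_conj]
    ring
  rw [hx] at this
  exact sub_eq_zero.mp (norm_eq_zero.mp (by nlinarith [norm_nonneg d]))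

theorem exists_isCharFn_eqOn (hf : IsPosDefFn f) (h0 : f 0 = 1) (H : AddSubgroup G)
    (hnorm : ∀ x ∈ H, ‖f x‖ = 1) :
    ∃ χ : G → ℂ, IsCharFn χ ∧ ∀ x ∈ H, f x = χ x := by
  have hne : ∀ x ∈ H, f x ≠ 0 := fun x hx => norm_ne_zero_iff.mp (by simp [hnorm x hx])
  let φ : H →+ Real.Angle := AddMonoidHom.mk' (fun x => (Complex.arg (f x) : Real.Angle))
    fun x y => by
      rw [AddSubgroup.coe_add, hf.map_add_of_norm_eq_one h0 (hnorm y y.2),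
        Complex.arg_mul_coe_angle (hne x x.2) (hne y y.2)]
  have : Fact (0 < 2 * Real.pi) := ⟨Real.two_pi_pos⟩
  have hBaer : Module.Baer ℤ Real.Angle := Module.Baer.of_divisible (AddCircle (2 * Real.pi))
  obtain ⟨Φ, hΦ⟩ := hBaer.extension_property_addMonoidHom H.subtype H.subtype_injective φ
  refine ⟨fun x => (Φ x).toCircle, ⟨fun x y => by simp, fun x => Circle.norm_coe _⟩,
    fun x hx => ?_⟩
  have hΦx : Φ x = Complex.arg (f x) := DFunLike.congr_fun hΦ ⟨x, hx⟩
  show f x = ((Φ x).toCircle : ℂ)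
  rw [hΦx, Real.Angle.toCircle_coe, Circle.coe_exp]
  conv_lhs => rw [← Complex.norm_mul_exp_arg_mul_I (f x), hnorm x hx, Complex.ofReal_one, one_mul]

end IsPosDefFn

theorem eq_one_of_mul_mul_eq_one {a b c : ℝ} (ha : 0 ≤ a) (hb : 0 ≤ b) (hc : 0 ≤ c)
    (ha₁ : a ≤ 1) (hb₁ : b ≤ 1) (hc₁ : c ≤ 1) (h : a * b * c = 1) : a = 1 ∧ b = 1 ∧ c = 1 := by
  refine ⟨?_, ?_, ?_⟩ <;> nlinarith [mul_le_one₀ ha₁ hb hb₁, mul_le_one₀ hb₁ hc hc₁,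
    mul_le_one₀ ha₁ hc hc₁]

theorem mem_support_mul_mul_iff {α M₀ : Type*} [MulZeroClass M₀] [NoZeroDivisors M₀]
    {f₁ f₂ f₃ : α → M₀} {x : α} :
    x ∈ support (f₁ * f₂ * f₃) ↔ f₁ x ≠ 0 ∧ f₂ x ≠ 0 ∧ f₃ x ≠ 0 := by
  simp only [mem_support, Pi.mul_apply, ne_eq, mul_eq_zero, not_or, and_assoc]

namespace SDTEq

variable {G : Type*} [AddCommGroup G] {f₁ f₂ f₃ : G → ℂ}

theorem mul_ne_zero_iff (h : SDTEq f₁ f₂ f₃) (hf₂ : IsPosDefFn f₂) (hf₃ : IsPosDefFn f₃)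
    (u v w : G) :
    f₁ (u + v + w) * f₂ (u - v - w) * f₃ (u + v - w) ≠ 0 ↔
      u ∈ support (f₁ * f₂ * f₃) ∧ v ∈ support (f₁ * f₂ * f₃) ∧ w ∈ support (f₁ * f₂ * f₃) := by
  rw [h u v w]
  simp only [mem_support_mul_mul_iff, ne_eq, mul_eq_zero, hf₂.map_neg_eq_zero_iff,
    hf₃.map_neg_eq_zero_iff]
  tauto

theorem neg_mem_support (hf₁ : IsPosDefFn f₁) (hf₂ : IsPosDefFn f₂) (hf₃ : IsPosDefFn f₃)
    {y : G} (hy : y ∈ support (f₁ * f₂ * f₃)) : -y ∈ support (f₁ * f₂ * f₃) := by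
  simpa only [mem_support_mul_mul_iff, ne_eq, hf₁.map_neg_eq_zero_iff, hf₂.map_neg_eq_zero_iff,
    hf₃.map_neg_eq_zero_iff] using hy

def supportAddSubgroup (h : SDTEq f₁ f₂ f₃) (hf₁ : IsPosDefFn f₁) (hf₂ : IsPosDefFn f₂)
    (hf₃ : IsPosDefFn f₃) (h0₁ : f₁ 0 = 1) (h0₂ : f₂ 0 = 1) (h0₃ : f₃ 0 = 1) :
    AddSubgroup G where
  carrier := support (f₁ * f₂ * f₃)
  zero_mem' := by simp [h0₁, h0₂, h0₃]
  neg_mem' := neg_mem_support hf₁ hf₂ hf₃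
  add_mem' {u v} hu hv := by
    have h0 : (0 : G) ∈ support (f₁ * f₂ * f₃) := by simp [h0₁, h0₂, h0₃]
    have hadd := (h.mul_ne_zero_iff hf₂ hf₃ u v 0).2 ⟨hu, hv, h0⟩
    have hsub := (h.mul_ne_zero_iff hf₂ hf₃ u (-v) 0).2 ⟨hu, neg_mem_support hf₁ hf₂ hf₃ hv, h0⟩
    simp only [add_zero, sub_zero, sub_neg_eq_add, _root_.mul_ne_zero_iff] at hadd hsub
    exact mem_support_mul_mul_iff.2 ⟨hadd.1.1, hsub.1.2, hadd.2⟩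

theorem mem_support_of_ne_zero_add_add (h : SDTEq f₁ f₂ f₃) (hf₁ : IsPosDefFn f₁)
    (hf₂ : IsPosDefFn f₂) (hf₃ : IsPosDefFn f₃) {n w : G} (hn : n ∈ support (f₁ * f₂ * f₃))
    (hw : f₁ (w + w + n) ≠ 0 ∨ f₂ (w + w + n) ≠ 0 ∨ f₃ (w + w + n) ≠ 0) :
    w ∈ support (f₁ * f₂ * f₃) := by
  obtain ⟨hn₁, hn₂, hn₃⟩ := mem_support_mul_mul_iff.1 hn
  rcases hw with hw | hw | hw
  · refine ((h.mul_ne_zero_iff hf₂ hf₃ (w + n) 0 w).1 ?_).2.2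
    rw [show w + n + 0 + w = w + w + n by abel, show w + n - 0 - w = n by abel,
      show w + n + 0 - w = n by abel]
    exact mul_ne_zero (mul_ne_zero hw hn₂) hn₃
  · have hneg := ((h.mul_ne_zero_iff hf₂ hf₃ (w + n) (-w) 0).1 ?_).2.1
    · simpa using neg_mem_support hf₁ hf₂ hf₃ hneg
    rw [show w + n + -w + 0 = n by abel, show w + n - -w - 0 = w + w + n by abel,
      show w + n + -w - 0 = n by abel]
    exact mul_ne_zero (mul_ne_zero hn₁ hw) hn₃
  · refine ((h.mul_ne_zero_iff hf₂ hf₃ n w (-w)).1 ?_).2.1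
    rw [show n + w + -w = n by abel, show n - w - -w = n by abel,
      show n + w - -w = w + w + n by abel]
    exact mul_ne_zero (mul_ne_zero hn₁ hn₂) hw

theorem norm_eq_one (h : SDTEq f₁ f₂ f₃) (hf₁ : IsPosDefFn f₁) (hf₂ : IsPosDefFn f₂)
    (hf₃ : IsPosDefFn f₃) (h0₁ : f₁ 0 = 1) (h0₂ : f₂ 0 = 1) (h0₃ : f₃ 0 = 1) {y : G}
    (hy : y ∈ support (f₁ * f₂ * f₃)) : ‖f₁ y‖ = 1 ∧ ‖f₂ y‖ = 1 ∧ ‖f₃ y‖ = 1 := by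
  have hpos : 0 < ‖f₁ y‖ * ‖f₂ y‖ * ‖f₃ y‖ := by
    simpa only [mem_support, Pi.mul_apply, ← norm_pos_iff, norm_mul] using hy
  -- with `(u₁, u₂, u₃) = (y, -y, y)`, (S-D T) says `p = p ^ 3` for `p = ‖f₁ y‖ ‖f₂ y‖ ‖f₃ y‖`
  have hcube := congrArg norm (h y (-y) y)
  rw [show y + -y + y = y by abel, show y - -y - y = y by abel, show y + -y - y = -y by abel,
    neg_neg] at hcube
  simp only [norm_mul, hf₁.norm_map_neg, hf₂.norm_map_neg, hf₃.norm_map_neg] at hcube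
  have hprod : ‖f₁ y‖ * ‖f₂ y‖ * ‖f₃ y‖ = 1 := by
    set p := ‖f₁ y‖ * ‖f₂ y‖ * ‖f₃ y‖
    have hp : p * (p ^ 2 - 1) = 0 := by linear_combination -hcube
    exact (pow_eq_one_iff_of_nonneg hpos.le two_ne_zero).1
      (sub_eq_zero.1 ((mul_eq_zero.1 hp).resolve_left hpos.ne'))
  exact eq_one_of_mul_mul_eq_one (norm_nonneg _) (norm_nonneg _) (norm_nonneg _)
    (hf₁.norm_le_one h0₁ y) (hf₂.norm_le_one h0₂ y) (hf₃.norm_le_one h0₃ y) hprod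

end SDTEq

theorem even_sub_of_zsmul_eq_zsmul {A : Type*} [AddCommGroup A] {a b : ℤ} {y z : A}
    (hab : IsCoprime a b) (h : b • y = a • z) (hy : ¬Even y) (hz : ¬Even z) : Even (y - z) := by
  rcases Int.even_or_odd b with ⟨b, rfl⟩ | ⟨b, rfl⟩ <;>
    rcases Int.even_or_odd a with ⟨a, rfl⟩ | ⟨a, rfl⟩
  · have : IsUnit (2 : ℤ) := hab.isUnit_of_dvd' ⟨a, (two_mul a).symm⟩ ⟨b, (two_mul b).symm⟩
    norm_num [Int.isUnit_iff] at this
  · exact absurd ⟨b • y - a • z, by linear_combination (norm := module) -h⟩ hz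
  · exact absurd ⟨a • z - b • y, by linear_combination (norm := module) h⟩ hy
  · exact ⟨a • z - b • y, by linear_combination (norm := module) h⟩

theorem AddSubgroup.exists_isCoprime_zsmul_eq_zsmul {Y : AddSubgroup ℚ} (y : Y) {z : Y}
    (hz : z ≠ 0) : ∃ a b : ℤ, 0 < b ∧ IsCoprime a b ∧ b • y = a • z := by
  set r := (y : ℚ) / z
  refine ⟨r.num, r.den, mod_cast r.pos, Rat.isCoprime_num_den r, Subtype.ext ?_⟩
  have hr : r * z = y := div_mul_cancel₀ _ fun h => hz (Subtype.ext h)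
  simp only [AddSubgroup.coe_zsmul, zsmul_eq_mul, Int.cast_natCast, ← Rat.mul_den_eq_num]
  linear_combination -(r.den : ℚ) * hr

theorem AddSubgroup.even_sub_of_not_even {Y : AddSubgroup ℚ} {y z : Y} (hy : ¬Even y)
    (hz : ¬Even z) : Even (y - z) := by
  obtain ⟨a, b, -, hab, h⟩ := AddSubgroup.exists_isCoprime_zsmul_eq_zsmul y (z := z)
    (by rintro rfl; exact hz Even.zero)
  exact even_sub_of_zsmul_eq_zsmul hab h hy hz

theorem AddSubgroup.exists_not_even {R : Type*} [Ring R] {Y : AddSubgroup R}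
    (h2Y : Y.map (AddMonoidHom.mulLeft 2) ≠ Y) : ∃ t : Y, ¬Even t := by
  by_contra! hev
  refine h2Y (le_antisymm ?_ fun x hx => ?_)
  · rintro _ ⟨w, hw, rfl⟩
    simpa [two_mul] using add_mem hw hw
  · obtain ⟨w, hw⟩ := hev ⟨x, hx⟩
    exact ⟨w, w.2, by simpa [two_mul] using congrArg Subtype.val hw.symm⟩

theorem AddSubgroup.mem_of_two_pow_nsmul_mem {A : Type*} [AddCommGroup A] {N : AddSubgroup A}
    (hhalf : ∀ w, w + w ∈ N → w ∈ N) (k : ℕ) {x : A} (hx : 2 ^ k • x ∈ N) : x ∈ N := by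
  induction k with
  | zero => simpa using hx
  | succ k ih => exact ih (hhalf _ (by rwa [← two_nsmul, ← mul_nsmul', ← pow_succ']))

theorem AddSubgroup.exists_mem_not_even {Y : AddSubgroup ℚ}
    (h2Y : Y.map (AddMonoidHom.mulLeft 2) ≠ Y) {N : AddSubgroup Y} (hN : N ≠ ⊥)
    (hhalf : ∀ w, w + w ∈ N → w ∈ N) : ∃ n ∈ N, ¬Even n := by
  -- otherwise some odd multiple `m • t` of an odd `t` lies in `N` (as `Y / N` is torsion) and
  -- is even, and then so is `t`
  by_contra! hev
  obtain ⟨t, ht⟩ := exists_not_even h2Y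
  obtain ⟨n, hnN, hn0⟩ := N.bot_or_exists_ne_zero.resolve_left hN
  obtain ⟨a, b, hb, -, hab⟩ := exists_isCoprime_zsmul_eq_zsmul t hn0
  lift b to ℕ using hb.le
  obtain ⟨k, m, ⟨j, rfl⟩, rfl⟩ := Nat.exists_eq_two_pow_mul_odd (by omega : b ≠ 0)
  have hm : (2 * j + 1) • t ∈ N := by
    refine N.mem_of_two_pow_nsmul_mem hhalf k ?_
    rw [← mul_nsmul', ← natCast_zsmul, hab]
    exact N.zsmul_mem hnN a
  obtain ⟨w, hw⟩ := hev _ hm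
  exact ht ⟨w - j • t, by linear_combination (norm := module) hw⟩

theorem AddSubgroup.exists_mem_eq_add_add {Y : AddSubgroup ℚ} {N : AddSubgroup Y} {n₀ : Y}
    (hn₀ : n₀ ∈ N) (hodd : ¬Even n₀) (y : Y) : ∃ n ∈ N, ∃ w, y = w + w + n := by
  by_cases hev : Even y
  · obtain ⟨w, rfl⟩ := hev
    exact ⟨0, N.zero_mem, w, (add_zero _).symm⟩
  · obtain ⟨w, hw⟩ := even_sub_of_not_even hev hodd
    exact ⟨n₀, hn₀, w, sub_eq_iff_eq_add.1 hw⟩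

/-- Let `Y` be a subgroup of `ℚ` with `2Y ≠ Y`, and let `f₁, f₂, f₃` be normalized
positive definite functions on `Y` satisfying equation (S-D T). If
`N = {y : f₁(y)f₂(y)f₃(y) ≠ 0} ≠ {0}`, then every `f i` has idempotent form: there
are a subgroup `H` of `Y` and characters `χ₁, χ₂, χ₃` of `Y` such that `f i = χ i`
on `H` and `f i = 0` off `H`. -/
theorem skitovich_darmois_SDT_idempotent_of_N_ne_zero
    (Y : AddSubgroup ℚ)
    (h2Y : Y.map (AddMonoidHom.mulLeft (2 : ℚ)) ≠ Y)
    (f₁ f₂ f₃ : ↥Y → ℂ)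
    (hpd₁ : IsPosDefFn f₁) (hpd₂ : IsPosDefFn f₂) (hpd₃ : IsPosDefFn f₃)
    (hn₁ : f₁ 0 = 1) (hn₂ : f₂ 0 = 1) (hn₃ : f₃ 0 = 1)
    (heq : SDTEq f₁ f₂ f₃)
    (hN : {y : ↥Y | f₁ y * f₂ y * f₃ y ≠ 0} ≠ {0}) :
    ∃ H : AddSubgroup ↥Y, ∃ χ₁ χ₂ χ₃ : ↥Y → ℂ,
      IsCharFn χ₁ ∧ IsCharFn χ₂ ∧ IsCharFn χ₃ ∧
      (∀ y ∈ H, f₁ y = χ₁ y ∧ f₂ y = χ₂ y ∧ f₃ y = χ₃ y) ∧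
      (∀ y ∉ H, f₁ y = 0 ∧ f₂ y = 0 ∧ f₃ y = 0) := by
  set N := heq.supportAddSubgroup hpd₁ hpd₂ hpd₃ hn₁ hn₂ hn₃
  have hN' : N ≠ ⊥ := fun h => hN (by rw [← AddSubgroup.coe_bot, ← h]; rfl)
  have hmem : ∀ {n w}, n ∈ N → (f₁ (w + w + n) ≠ 0 ∨ f₂ (w + w + n) ≠ 0 ∨ f₃ (w + w + n) ≠ 0) →
      w ∈ N := heq.mem_support_of_ne_zero_add_add hpd₁ hpd₂ hpd₃
  obtain ⟨n₀, hn₀, hn₀odd⟩ := AddSubgroup.exists_mem_not_even h2Y hN' fun w hw =>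
    hmem N.zero_mem (Or.inl (by rw [add_zero]; exact (mem_support_mul_mul_iff.1 hw).1))
  have hsupp : ∀ y, (f₁ y ≠ 0 ∨ f₂ y ≠ 0 ∨ f₃ y ≠ 0) → y ∈ N := by
    intro y hy
    obtain ⟨n, hn, w, rfl⟩ := AddSubgroup.exists_mem_eq_add_add hn₀ hn₀odd y
    have hw := hmem hn hy
    exact add_mem (add_mem hw hw) hn
  have hnorm := fun y (hy : y ∈ N) => heq.norm_eq_one hpd₁ hpd₂ hpd₃ hn₁ hn₂ hn₃ hy
  obtain ⟨χ₁, hχ₁, hf₁⟩ := hpd₁.exists_isCharFn_eqOn hn₁ N fun y hy => (hnorm y hy).1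
  obtain ⟨χ₂, hχ₂, hf₂⟩ := hpd₂.exists_isCharFn_eqOn hn₂ N fun y hy => (hnorm y hy).2.1
  obtain ⟨χ₃, hχ₃, hf₃⟩ := hpd₃.exists_isCharFn_eqOn hn₃ N fun y hy => (hnorm y hy).2.2
  refine ⟨N, χ₁, χ₂, χ₃, hχ₁, hχ₂, hχ₃, fun y hy => ⟨hf₁ y hy, hf₂ y hy, hf₃ y hy⟩,
    fun y hy => ?_⟩
  simpa only [not_or, not_not] using mt (hsupp y) hy
end

section
/- Let Y be a subgroup of ℚ, let p be a prime with p ≡ 3 (mod 4), and let y_0 ∈ Y with y_0 ∉ 2Y. Define f : Y → ℂ by f(0) = 1, f(y_0) = f(−y_0) = 1/2, and f(y) = 0 for all other y. Then f satisfies the equation f(u+v+t)·f(u−pv+t)·f(u+v−pt) = f(u)^3·f(v)^2·f(t)^2·f(−pv)·f(−pt) for all u, v, t ∈ Y. -/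
/-! Outside the points `v = t = 0`, where both sides equal `f u ^ 3`, both sides vanish.
On the right, `w = ±y₀` forces `-(p • w) = ∓p • y₀`, which lies outside the support `{0, y₀, -y₀}`.
On the left, the first two arguments differ by `(p + 1) • v` and the first and third by `(p + 1) • t`;
since `4 ∣ p + 1`, such a difference lies in `4Y`, whereas no two distinct points of
`{0, y₀, -y₀}` are congruent modulo `4Y` because `y₀ ∉ 2Y` and `Y` is torsion-free. -/

open Function

section SupportOfThreePoints

variable {G : Type*} [AddCommGroup G] [IsAddTorsionFree G] {y₀ : G}

theorem eq_of_sub_eq_four_nsmul (hy₀ : ¬ ∃ z, y₀ = z + z) {a b z : G}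
    (ha : a ∈ ({0, y₀, -y₀} : Set G)) (hb : b ∈ ({0, y₀, -y₀} : Set G))
    (h : a - b = 4 • z) : a = b := by
  have h₁ : ∀ z : G, y₀ ≠ 4 • z := fun z hz => hy₀ ⟨2 • z, by rw [hz, ← add_nsmul]⟩
  have h₂ : ∀ z : G, y₀ + y₀ ≠ 4 • z := fun z hz =>
    hy₀ ⟨z, IsAddTorsionFree.nsmul_right_injective two_ne_zero <| by
      change 2 • y₀ = 2 • (z + z)
      rw [two_nsmul y₀, hz]
      abel⟩
  rcases ha with rfl | rfl | rfl <;> rcases hb with rfl | rfl | rfl <;>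
    first
    | rfl
    | (exfalso; apply h₁ z; rw [← h]; abel1)
    | (exfalso; apply h₁ (-z); rw [smul_neg, ← h]; abel1)
    | (exfalso; apply h₂ z; rw [← h]; abel1)
    | (exfalso; apply h₂ (-z); rw [smul_neg, ← h]; abel1)

theorem zsmul_notMem_of_two_le_natAbs (hy₀ : y₀ ≠ 0) {m : ℤ} (hm : 2 ≤ m.natAbs) :
    m • y₀ ∉ ({0, y₀, -y₀} : Set G) := by
  have inj := smul_left_injective ℤ hy₀
  rintro (h | h | h)
  · have : m = 0 := inj (h.trans (zero_smul ℤ y₀).symm)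
    omega
  · have : m = 1 := inj (h.trans (one_smul ℤ y₀).symm)
    omega
  · have : m = -1 := inj (h.trans (neg_one_smul ℤ y₀).symm)
    omega

variable {M₀ : Type*} [MulZeroClass M₀] {f : G → M₀}

theorem mul_eq_zero_of_sub_eq_nsmul (hf : support f ⊆ {0, y₀, -y₀})
    (hy₀ : ¬ ∃ z, y₀ = z + z) {n : ℕ} (hn : n % 4 = 3) {a b w : G} (hw : w ≠ 0)
    (hab : a - b = (n + 1) • w) : f a * f b = 0 := by
  by_contra hne
  have h4 : (n + 1) • w = 4 • ((n / 4 + 1) • w) := by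
    rw [← mul_nsmul']
    congr 1
    omega
  have hab' := eq_of_sub_eq_four_nsmul hy₀ (hf (left_ne_zero_of_mul hne))
    (hf (right_ne_zero_of_mul hne)) (hab.trans h4)
  rw [hab', sub_self, eq_comm, nsmul_eq_zero_iff] at hab
  exact hw (hab.resolve_right n.succ_ne_zero)

theorem mul_apply_neg_nsmul_eq_zero (hf : support f ⊆ {0, y₀, -y₀}) (hy₀ : y₀ ≠ 0)
    {n : ℕ} (hn : 2 ≤ n) {w : G} (hw : w ≠ 0) : f w * f (-(n • w)) = 0 := by
  by_contra hne
  have hmem := hf (right_ne_zero_of_mul hne)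
  rcases (hf (left_ne_zero_of_mul hne)).resolve_left hw with rfl | rfl
  · refine zsmul_notMem_of_two_le_natAbs hy₀ (m := -n) (by omega) ?_
    rwa [neg_smul, natCast_zsmul]
  · refine zsmul_notMem_of_two_le_natAbs hy₀ (m := n) (by omega) ?_
    rwa [natCast_zsmul, ← neg_neg (n • y₀), ← smul_neg]

end SupportOfThreePoints

theorem SD_equation_for_density_distribution_p_three_mod_four_general
    (Y : AddSubgroup ℚ) (p : ℕ) (hp4 : p % 4 = 3)
    (y₀ : ↥Y) (hy₀ : ¬ ∃ z : ↥Y, y₀ = z + z)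
    (f : ↥Y → ℂ)
    (hf0 : f 0 = 1)
    (hfz : ∀ y : ↥Y, y ≠ 0 → y ≠ y₀ → y ≠ -y₀ → f y = 0) :
    ∀ u v t : ↥Y,
      f (u + v + t) * f (u - p • v + t) * f (u + v - p • t) =
        f u ^ 3 * f v ^ 2 * f t ^ 2 * f (-(p • v)) * f (-(p • t)) := by
  have hf : support f ⊆ {0, y₀, -y₀} := fun y hy => by
    by_contra h
    simp only [Set.mem_insert_iff, Set.mem_singleton_iff, not_or] at h
    exact hy (hfz y h.1 h.2.1 h.2.2)
  have hy₀' : y₀ ≠ 0 := by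
    rintro rfl
    exact hy₀ ⟨0, (add_zero 0).symm⟩
  intro u v t
  by_cases hvt : v = 0 ∧ t = 0
  · obtain ⟨rfl, rfl⟩ := hvt
    simp only [add_zero, smul_zero, sub_zero, neg_zero, hf0]
    ring
  rcases not_and_or.mp hvt with hv | ht
  · have hL := mul_eq_zero_of_sub_eq_nsmul hf hy₀ hp4 (a := u + v + t) (b := u - p • v + t) hv
      (by rw [succ_nsmul]; abel)
    have hR := mul_apply_neg_nsmul_eq_zero hf hy₀' (by omega : 2 ≤ p) hv
    linear_combination f (u + v - p • t) * hL - f u ^ 3 * f v * f t ^ 2 * f (-(p • t)) * hR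
  · have hL := mul_eq_zero_of_sub_eq_nsmul hf hy₀ hp4 (a := u + v + t) (b := u + v - p • t) ht
      (by rw [succ_nsmul]; abel)
    have hR := mul_apply_neg_nsmul_eq_zero hf hy₀' (by omega : 2 ≤ p) ht
    linear_combination f (u - p • v + t) * hL - f u ^ 3 * f v ^ 2 * f t * f (-(p • v)) * hR

/-- Let `Y` be a subgroup of `ℚ`, `p` a prime with `p ≡ 3 (mod 4)`, and `y₀ ∈ Y`
with `y₀ ∉ 2Y`. The function `f` with `f(0) = 1`, `f(±y₀) = 1/2` and `f = 0`
elsewhere satisfies the Skitovich–Darmois equation corresponding to the linear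
forms `L₁ = ξ₁+ξ₂+ξ₃`, `L₂ = ξ₁−pξ₂+ξ₃`, `L₃ = ξ₁+ξ₂−pξ₃`. -/
theorem SD_equation_for_density_distribution_p_three_mod_four
    (Y : AddSubgroup ℚ) (p : ℕ) (hp : p.Prime) (hp4 : p % 4 = 3)
    (y₀ : ↥Y) (hy₀ : ¬ ∃ z : ↥Y, y₀ = z + z)
    (f : ↥Y → ℂ)
    (hf0 : f 0 = 1) (hfy : f y₀ = 1/2) (hfy' : f (-y₀) = 1/2)
    (hfz : ∀ y : ↥Y, y ≠ 0 → y ≠ y₀ → y ≠ -y₀ → f y = 0) :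
    ∀ u v t : ↥Y,
      f (u + v + t) * f (u - p • v + t) * f (u + v - p • t) =
        f u ^ 3 * f v ^ 2 * f t ^ 2 * f (-(p • v)) * f (-(p • t)) :=
  SD_equation_for_density_distribution_p_three_mod_four_general Y p hp4 y₀ hy₀ f hf0 hfz
end
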